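/- Let X, X′ ⊆ [n] with |X| ≥ 2, |X′| ≥ 2, and X ∩ X′ = {i_α} a single element. Then the monomial e_{X Δ X′} of the symmetric difference lies in the ideal ℑ({X, X′}) generated by ∂(e_X) and ∂(e_{X′}). -/
import Mathlib


open ExteriorAlgebra

/-- The Grassmann algebra over `K` on generators `e 0, ..., e (n-1)`. -/
abbrev Grass (K : Type) [Field K] (n : ℕ) := ExteriorAlgebra K (Fin n → K)

/-- The generator `e i`. -/
noncomputable def gen (K : Type) [Field K] (n : ℕ) (i : Fin n) : Grass K n :=
  ExteriorAlgebra.ι K (Pi.single i 1)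

/-- The monomial associated to a list of indices. -/
noncomputable def monList (K : Type) [Field K] (n : ℕ) (l : List (Fin n)) : Grass K n :=
  (l.map (gen K n)).prod

/-- The monomial `e_X` of a subset `X ⊆ [n]`, factors in increasing order. -/
noncomputable def mon (K : Type) [Field K] (n : ℕ) (X : Finset (Fin n)) : Grass K n :=
  monList K n (X.sort (· ≤ ·))

/-- The degree `-1` antiderivation `∂` on the Grassmann algebra with `∂ (e i) = 1`
(left contraction with the covector sending each generator to `1`). -/
noncomputable def bd (K : Type) [Field K] (n : ℕ) : Grass K n →ₗ[K] Grass K n :=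
  CliffordAlgebra.contractLeft (∑ i : Fin n, LinearMap.proj i)

/-- The two-sided ideal `ℑ(𝔛)` generated by the differentials `∂ e_Y`, `Y ∈ 𝔛`. -/
noncomputable def OSIdeal (K : Type) [Field K] (n : ℕ) (X : Set (Finset (Fin n))) :
    TwoSidedIdeal (Grass K n) :=
  TwoSidedIdeal.span ((fun Y => bd K n (mon K n Y)) '' X)

section Aux

variable (K : Type) [Field K] (n : ℕ)

lemma monList_cons (x : Fin n) (l : List (Fin n)) :
    monList K n (x :: l) = gen K n x * monList K n l := by
  simp [monList]

lemma monList_append (l l' : List (Fin n)) :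
    monList K n (l ++ l') = monList K n l * monList K n l' := by
  simp [monList]

lemma gen_swap (i j : Fin n) : gen K n i * gen K n j = -(gen K n j * gen K n i) := by
  have h := ExteriorAlgebra.ι_add_mul_swap (R := K) (M := Fin n → K)
    (Pi.single i (1:K)) (Pi.single j 1)
  rw [gen, gen]
  exact eq_neg_of_add_eq_zero_left h

lemma bd_gen_mul (i : Fin n) (x : Grass K n) :
    bd K n (gen K n i * x) = x - gen K n i * bd K n x := by
  rw [bd, gen]
  rw [CliffordAlgebra.contractLeft_ι_mul]
  congr 1
  have : (∑ j : Fin n, LinearMap.proj j : (Fin n → K) →ₗ[K] K) (Pi.single i 1) = 1 := by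
    simp [LinearMap.sum_apply, Finset.sum_pi_single]
  rw [this, one_smul]

lemma bd_one : bd K n (1 : Grass K n) = 0 := by
  rw [bd]
  apply CliffordAlgebra.contractLeft_one

lemma gen_mul_monList_mul_gen (i : Fin n) (l : List (Fin n)) :
    gen K n i * monList K n l * gen K n i = 0 := by
  induction l with
  | nil =>
      simp [monList, gen, ExteriorAlgebra.ι_sq_zero]
  | cons x l ih =>
      rw [monList_cons]
      calc gen K n i * (gen K n x * monList K n l) * gen K n i
          = (gen K n i * gen K n x) * (monList K n l * gen K n i) := by noncomm_ring
        _ = -(gen K n x * gen K n i) * (monList K n l * gen K n i) := by rw [gen_swap K n i x]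
        _ = -(gen K n x * (gen K n i * monList K n l * gen K n i)) := by noncomm_ring
        _ = 0 := by rw [ih, mul_zero, neg_zero]

lemma gen_mul_bd_monList_mul_gen (i : Fin n) (l : List (Fin n)) :
    gen K n i * bd K n (monList K n l) * gen K n i = 0 := by
  induction l with
  | nil =>
      show gen K n i * bd K n (1 : Grass K n) * gen K n i = 0
      rw [bd_one, mul_zero, zero_mul]
  | cons x l ih =>
      rw [monList_cons, bd_gen_mul]
      calc gen K n i * (monList K n l - gen K n x * bd K n (monList K n l)) * gen K n i
          = gen K n i * monList K n l * gen K n i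
            - (gen K n i * gen K n x) * (bd K n (monList K n l) * gen K n i) := by noncomm_ring
        _ = 0 - (-(gen K n x * gen K n i)) * (bd K n (monList K n l) * gen K n i) := by
            rw [gen_mul_monList_mul_gen, gen_swap K n i x]
        _ = gen K n x * (gen K n i * bd K n (monList K n l) * gen K n i) := by noncomm_ring
        _ = 0 := by rw [ih, mul_zero]

lemma perm_monList {l l' : List (Fin n)} (h : l.Perm l') :
    ∃ c : K, c * c = 1 ∧ monList K n l' = c • monList K n l := by
  induction h with
  | nil => exact ⟨1, by simp, by simp⟩
  | cons x h ih =>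
      obtain ⟨c, hc, h2⟩ := ih
      exact ⟨c, hc, by rw [monList_cons, monList_cons, h2, mul_smul_comm]⟩
  | swap x y l =>
      refine ⟨-1, by ring, ?_⟩
      rw [monList_cons, monList_cons, monList_cons, monList_cons, ← mul_assoc, ← mul_assoc,
        gen_swap K n y x]
      simp
  | trans h1 h2 ih1 ih2 =>
      obtain ⟨c1, hc1, hh1⟩ := ih1
      obtain ⟨c2, hc2, hh2⟩ := ih2
      refine ⟨c2 * c1, by rw [mul_mul_mul_comm, hc1, hc2, one_mul], ?_⟩
      rw [hh2, hh1, smul_smul]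

lemma smul_mem'' (I : TwoSidedIdeal (Grass K n)) (c : K) {x : Grass K n} (h : x ∈ I) :
    c • x ∈ I := by
  rw [Algebra.smul_def]
  exact I.mul_mem_left _ _ h

end Aux

/-- if `X ∩ X' = {i}` with `|X|, |X'| ≥ 2`, then `e_{X Δ X'} ∈ ℑ({X, X'})`. -/
theorem stmt4 (K : Type) [Field K] (n : ℕ) (X X' : Finset (Fin n)) (i : Fin n)
    (hX : 2 ≤ X.card) (hX' : 2 ≤ X'.card) (hi : X ∩ X' = {i}) :
    mon K n (symmDiff X X') ∈ OSIdeal K n {X, X'} := by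
  have hmem : ∀ a : Fin n, (a ∈ X ∧ a ∈ X') ↔ a = i := by
    intro a
    rw [← Finset.mem_inter, hi, Finset.mem_singleton]
  have hiX : i ∈ X := ((hmem i).mpr rfl).1
  have hiX' : i ∈ X' := ((hmem i).mpr rfl).2
  set A : List (Fin n) := (X.erase i).sort (· ≤ ·) with hA
  set B : List (Fin n) := (X'.erase i).sort (· ≤ ·) with hB
  -- permutation facts
  have permX : (X.sort (· ≤ ·)).Perm (i :: A) := by
    rw [← Multiset.coe_eq_coe]
    show (↑(X.sort (· ≤ ·)) : Multiset (Fin n)) = i ::ₘ ↑A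
    rw [Finset.sort_eq, hA, Finset.sort_eq, Finset.erase_val,
      Multiset.cons_erase (by exact_mod_cast hiX)]
  have permX' : (X'.sort (· ≤ ·)).Perm (i :: B) := by
    rw [← Multiset.coe_eq_coe]
    show (↑(X'.sort (· ≤ ·)) : Multiset (Fin n)) = i ::ₘ ↑B
    rw [Finset.sort_eq, hB, Finset.sort_eq, Finset.erase_val,
      Multiset.cons_erase (by exact_mod_cast hiX')]
  have hdisj : Disjoint (X.erase i) (X'.erase i) := by
    rw [Finset.disjoint_left]
    intro a ha ha'
    rw [Finset.mem_erase] at ha ha'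
    exact ha.1 ((hmem a).mp ⟨ha.2, ha'.2⟩)
  have hsd : symmDiff X X' = (X.erase i) ∪ (X'.erase i) := by
    ext a
    rw [Finset.mem_symmDiff, Finset.mem_union, Finset.mem_erase, Finset.mem_erase]
    constructor
    · rintro (⟨h1, h2⟩ | ⟨h1, h2⟩)
      · left
        refine ⟨fun he => h2 (he ▸ hiX'), h1⟩
      · right
        refine ⟨fun he => h2 (he ▸ hiX), h1⟩
    · rintro (⟨h1, h2⟩ | ⟨h1, h2⟩)
      · exact Or.inl ⟨h2, fun h3 => h1 ((hmem a).mp ⟨h2, h3⟩)⟩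
      · exact Or.inr ⟨h2, fun h3 => h1 ((hmem a).mp ⟨h3, h2⟩)⟩
  have permSD : ((symmDiff X X').sort (· ≤ ·)).Perm (A ++ B) := by
    rw [← Multiset.coe_eq_coe]
    show (↑((symmDiff X X').sort (· ≤ ·)) : Multiset (Fin n)) = ↑A + ↑B
    rw [Finset.sort_eq, hA, hB, Finset.sort_eq, Finset.sort_eq, hsd,
      ← Finset.disjUnion_eq_union _ _ hdisj]
    rfl
  -- algebraic setup
  set a : Grass K n := monList K n A with ha
  set b : Grass K n := monList K n B with hb
  obtain ⟨c₁, hc₁, e₁⟩ := perm_monList K n permX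
  obtain ⟨c₂, hc₂, e₂⟩ := perm_monList K n permX'
  obtain ⟨c₃, hc₃, e₃⟩ := perm_monList K n permSD
  rw [monList_cons] at e₁
  rw [monList_cons] at e₂
  rw [monList_append] at e₃
  have e₁' : gen K n i * a = c₁ • mon K n X := e₁
  have e₂' : gen K n i * b = c₂ • mon K n X' := e₂
  have e₃' : a * b = c₃ • mon K n (symmDiff X X') := e₃
  -- e₁ : gen i * a = c₁ • mon X  (note: mon X = monList (sort X))
  have hu : bd K n (mon K n X) ∈ OSIdeal K n {X, X'} := by
    apply TwoSidedIdeal.subset_span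
    exact ⟨X, Or.inl rfl, rfl⟩
  have hu' : bd K n (mon K n X') ∈ OSIdeal K n {X, X'} := by
    apply TwoSidedIdeal.subset_span
    exact ⟨X', Or.inr rfl, rfl⟩
  have ea : a = c₁ • bd K n (mon K n X) + gen K n i * bd K n a := by
    have h : a - gen K n i * bd K n a = c₁ • bd K n (mon K n X) := by
      calc a - gen K n i * bd K n a = bd K n (gen K n i * a) := (bd_gen_mul K n i a).symm
        _ = c₁ • bd K n (mon K n X) := by rw [e₁', LinearMap.map_smul]
    rw [← h, sub_add_cancel]
  have eb : b = c₂ • bd K n (mon K n X') + gen K n i * bd K n b := by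
    have h : b - gen K n i * bd K n b = c₂ • bd K n (mon K n X') := by
      calc b - gen K n i * bd K n b = bd K n (gen K n i * b) := (bd_gen_mul K n i b).symm
        _ = c₂ • bd K n (mon K n X') := by rw [e₂', LinearMap.map_smul]
    rw [← h, sub_add_cancel]
  -- key product decomposition
  have key : a * b = c₁ • (bd K n (mon K n X) * b)
      + c₂ • (gen K n i * bd K n a * bd K n (mon K n X'))
      + (gen K n i * bd K n a * gen K n i) * bd K n b := by
    calc a * b = (c₁ • bd K n (mon K n X) + gen K n i * bd K n a) * b := by rw [← ea]
      _ = c₁ • (bd K n (mon K n X) * b) + gen K n i * bd K n a * b := by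
          rw [add_mul, smul_mul_assoc]
      _ = c₁ • (bd K n (mon K n X) * b)
          + gen K n i * bd K n a * (c₂ • bd K n (mon K n X') + gen K n i * bd K n b) := by
          rw [← eb]
      _ = _ := by
          rw [mul_add, mul_smul_comm,
            ← mul_assoc (gen K n i * bd K n a) (gen K n i), ← add_assoc]
  rw [gen_mul_bd_monList_mul_gen, zero_mul, add_zero] at key
  have hab : a * b ∈ OSIdeal K n {X, X'} := by
    rw [key]
    apply TwoSidedIdeal.add_mem
    · exact smul_mem'' K n _ c₁ (TwoSidedIdeal.mul_mem_right _ _ _ hu)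
    · exact smul_mem'' K n _ c₂ (TwoSidedIdeal.mul_mem_left _ _ _ hu')
  -- conclude
  have : mon K n (symmDiff X X') = c₃ • (a * b) := by
    rw [e₃', smul_smul, hc₃, one_smul]
  rw [this]
  exact smul_mem'' K n _ c₃ hab
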